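/- Suppose Assumption 1 holds: Σ_{r=0}^∞ sup_{τ∈ℤ} (ξ_{τ,r}² σ_{τ−r}²) < ∞ and for every t ∈ ℤ the series μ_t := Σ_{r=0}^∞ ξ_{t,r} φ_0(t−r) converges. For each t let Y_t = μ_t + Z_t, where Z_t is the L² limit of the partial sums Σ_{r=0}^{n} ξ_{t,r} ε_{t−r}. Then the MA(∞) process (Y_t) solves the equation: for every t ∈ ℤ, Y_t = φ_0(t) + Σ_{m=1}^p φ_m(t) Y_{t−m} + ε_t almost surely. -/

import Mathlib

/-!
Expanding the lower Hessenberg determinant `ξ_{t,k}` along its last row gives the recursion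
`ξ_{t,k} = ∑_{m=1}^p φ_m(t) ξ_{t-m,k-m}` for `k ≥ 1`. Consequently, for any sequence `c`, the
partial sums `∑_{r ≤ n} ξ_{t,r} c_{t-r}` satisfy the PAR recursion exactly as soon as `n ≥ p`,
and the recursion passes to the limit in any Hausdorff topological vector space. Applied in `ℝ`
to `c = φ_0` and in `L²(μ)` to `c = ε`, this gives the equation for `μ_t` and, almost surely,
for `Z_t`.
-/

open Finset

/-- The `k × k` solution matrix `Φ_{t,k}`: its (1-based) `(i,j)` entry is `-1` if `i = j-1`,
`φ_{1+i−j}(t−k+i)` if `0 ≤ i−j ≤ p−1`, and `0` otherwise. -/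
noncomputable def PhiMat (p : ℕ) (φ : ℕ → ℤ → ℝ) (t : ℤ) (k : ℕ) :
    Matrix (Fin k) (Fin k) ℝ :=
  fun i j =>
    if (i : ℕ) + 1 = (j : ℕ) then -1
    else if (j : ℕ) ≤ (i : ℕ) ∧ (i : ℕ) - (j : ℕ) + 1 ≤ p then
      φ ((i : ℕ) - (j : ℕ) + 1) (t - (k : ℤ) + (i : ℕ) + 1)
    else 0

/-- The Hessenbergian (Green function) `ξ_{t,k} = det Φ_{t,k}`, with the conventions
`ξ_{t,0} = 1` (empty determinant) and `ξ_{t,k} = 0` for `k < 0`. -/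
noncomputable def xi (p : ℕ) (φ : ℕ → ℤ → ℝ) (t : ℤ) (k : ℤ) : ℝ :=
  if 0 ≤ k then (PhiMat p φ t k.toNat).det else 0

open MeasureTheory Filter Topology

theorem Fin.val_succAbove {n : ℕ} (j : Fin (n + 1)) (c : Fin n) :
    (j.succAbove c : ℕ) = if (c : ℕ) < j then (c : ℕ) else c + 1 := by
  rcases lt_or_ge (Fin.castSucc c) j with h | h
  · rw [Fin.succAbove_of_castSucc_lt _ _ h, if_pos (show (c : ℕ) < j from h)]; rfl
  · rw [Fin.succAbove_of_le_castSucc _ _ h, if_neg (show ¬(c : ℕ) < j from not_lt.2 h)]; rfl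

namespace Matrix

variable {R : Type*} [CommRing R] {n : ℕ} (A : Matrix (Fin (n + 1)) (Fin (n + 1)) R)
  (h_super : ∀ i j : Fin (n + 1), (i : ℕ) + 1 = j → A i j = -1)
  (h_zero : ∀ i j : Fin (n + 1), (i : ℕ) + 1 < j → A i j = 0)
include h_super h_zero

/- After reindexing by `Fin j ⊕ Fin (n - j)` the minor is block lower triangular: the leading
`j × j` block of `A`, and a lower triangular block whose diagonal is the superdiagonal of `A`. -/
theorem det_submatrix_last_succAbove_of_hessenberg (j : Fin (n + 1)) :
    (A.submatrix (Fin.last n).succAbove j.succAbove).det =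
      (-1) ^ (n - j) * (A.submatrix (Fin.castLE j.is_le') (Fin.castLE j.is_le')).det := by
  let e : Fin j ⊕ Fin (n - j) ≃ Fin n :=
    finSumFinEquiv.trans (finCongr (by omega : (j : ℕ) + (n - j) = n))
  set M := (A.submatrix (Fin.last n).succAbove j.succAbove).submatrix e e with hM
  have row_inl (r : Fin j) : ((Fin.last n).succAbove (e (.inl r)) : ℕ) = r := by
    simp [e, Fin.succAbove_last]
  have row_inr (r : Fin (n - j)) : ((Fin.last n).succAbove (e (.inr r)) : ℕ) = j + r := by
    simp [e, Fin.succAbove_last]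
  have col_inl (c : Fin j) : (j.succAbove (e (.inl c)) : ℕ) = c := by
    simp [e, Fin.val_succAbove]
  have col_inr (c : Fin (n - j)) : (j.succAbove (e (.inr c)) : ℕ) = j + c + 1 := by
    simp [e, Fin.val_succAbove]
  have h₁₂ : M.toBlocks₁₂ = 0 := by
    ext r c
    exact h_zero _ _ (by rw [row_inl, col_inr]; omega)
  have h₂₂ : M.toBlocks₂₂.det = (-1) ^ (n - j) := by
    have h_lower : M.toBlocks₂₂.IsLowerTriangular := fun r c hrc => by
      have : (r : ℕ) < c := OrderDual.toDual_lt_toDual.mp hrc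
      exact h_zero _ _ (by rw [row_inr, col_inr]; omega)
    have h_diag (r : Fin (n - j)) : M.toBlocks₂₂ r r = -1 :=
      h_super _ _ (by rw [row_inr, col_inr])
    rw [det_of_isLowerTriangular _ h_lower, prod_congr rfl fun r _ => h_diag r,
      prod_const, card_univ, Fintype.card_fin]
  have h₁₁ : M.toBlocks₁₁ = A.submatrix (Fin.castLE j.is_le') (Fin.castLE j.is_le') := by
    ext r c
    exact congr_arg₂ A (Fin.ext (row_inl r)) (Fin.ext (col_inl c))
  rw [← det_submatrix_equiv_self e, ← hM, ← fromBlocks_toBlocks M, h₁₂, det_fromBlocks_zero₁₂, h₂₂,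
    h₁₁, mul_comm]

theorem det_eq_sum_of_hessenberg :
    A.det = ∑ j : Fin (n + 1),
      A (Fin.last n) j * (A.submatrix (Fin.castLE j.is_le') (Fin.castLE j.is_le')).det := by
  rw [det_succ_row _ (Fin.last n)]
  refine sum_congr rfl fun j _ => ?_
  have h_sign : (-1 : R) ^ (n + j) * (-1) ^ (n - j) = 1 := by
    rw [← pow_add, show n + j + (n - j) = 2 * n by omega, pow_mul, neg_one_sq, one_pow]
  rw [det_submatrix_last_succAbove_of_hessenberg A h_super h_zero, Fin.val_last]
  linear_combination (A (Fin.last n) j *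
    (A.submatrix (Fin.castLE j.is_le') (Fin.castLE j.is_le')).det) * h_sign

end Matrix

theorem xi_of_neg (p : ℕ) (φ : ℕ → ℤ → ℝ) (t : ℤ) {k : ℤ} (hk : k < 0) : xi p φ t k = 0 := by
  simp [xi, not_le.2 hk]

theorem xi_natCast (p : ℕ) (φ : ℕ → ℤ → ℝ) (t : ℤ) (k : ℕ) : xi p φ t k = (PhiMat p φ t k).det := by
  simp [xi]

theorem xi_zero (p : ℕ) (φ : ℕ → ℤ → ℝ) (t : ℤ) : xi p φ t 0 = 1 := by
  simpa using xi_natCast p φ t 0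

theorem PhiMat_submatrix_castLE (p : ℕ) (φ : ℕ → ℤ → ℝ) (t : ℤ) {j k : ℕ} (h : j ≤ k) :
    (PhiMat p φ t k).submatrix (Fin.castLE h) (Fin.castLE h) = PhiMat p φ (t - (k - j)) j := by
  ext r c
  simp only [PhiMat, Matrix.submatrix_apply, Fin.val_castLE]
  ring_nf

theorem PhiMat_last (p : ℕ) (φ : ℕ → ℤ → ℝ) (t : ℤ) (k : ℕ) (j : Fin (k + 1)) :
    PhiMat p φ t (k + 1) (Fin.last k) j = if k - j + 1 ≤ p then φ (k - j + 1) t else 0 := by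
  simp [PhiMat, j.is_le, show k + 1 ≠ j by omega, show t - (k + 1 : ℤ) + k + 1 = t by ring]

theorem det_PhiMat_succ (p : ℕ) (φ : ℕ → ℤ → ℝ) (t : ℤ) (k : ℕ) :
    (PhiMat p φ t (k + 1)).det = ∑ j : Fin (k + 1),
      (if k - j + 1 ≤ p then φ (k - j + 1) t else 0) * xi p φ (t - (k + 1 - j)) j := by
  rw [Matrix.det_eq_sum_of_hessenberg _ (fun i j h => by simp [PhiMat, h])
    (fun i j h => by simp [PhiMat, h.ne, show ¬ (j : ℕ) ≤ i by omega])]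
  refine sum_congr rfl fun j _ => ?_
  rw [PhiMat_last, PhiMat_submatrix_castLE, xi_natCast]
  push_cast
  rfl

theorem xi_eq_sum (p : ℕ) (φ : ℕ → ℤ → ℝ) (t : ℤ) {k : ℤ} (hk : 0 < k) :
    xi p φ t k = ∑ m ∈ Icc 1 p, φ m t * xi p φ (t - m) (k - m) := by
  obtain ⟨n, rfl⟩ : ∃ n : ℕ, k = (n + 1 : ℕ) := ⟨(k - 1).toNat, by omega⟩
  set F : ℕ → ℝ := fun m => φ m t * xi p φ (t - m) ((n + 1 : ℕ) - m)
  have hF : ∀ m, n + 1 < m → F m = 0 := fun m hm => by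
    simp only [F, xi_of_neg p φ _ (by omega : ((n + 1 : ℕ) : ℤ) - m < 0), mul_zero]
  calc xi p φ t (n + 1 : ℕ)
      = ∑ j ∈ range (n + 1),
          (if n - j + 1 ≤ p then φ (n - j + 1) t else 0) * xi p φ (t - (n + 1 - j)) j := by
        rw [xi_natCast, det_PhiMat_succ, Fin.sum_univ_eq_sum_range (fun j =>
          (if n - j + 1 ≤ p then φ (n - j + 1) t else 0) * xi p φ (t - (n + 1 - j)) j)]
    _ = ∑ m ∈ Icc 1 (n + 1), if m ≤ p then F m else 0 := by
        refine sum_nbij' (fun j => n + 1 - j) (fun m => n + 1 - m) ?_ ?_ ?_ ?_ ?_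
        all_goals intro j hj
        all_goals simp only [mem_range, mem_Icc] at hj ⊢
        any_goals omega
        rw [show n - j + 1 = n + 1 - j by omega]
        split_ifs
        · simp only [F]
          congr 3 <;> push_cast [Nat.cast_sub hj.le] <;> ring
        · rw [zero_mul]
    _ = ∑ m ∈ Icc 1 p, F m := by
        rw [← sum_filter]
        refine sum_subset (fun m => by simp only [mem_filter, mem_Icc]; omega)
          fun m hm hm' => hF m ?_
        simp only [mem_filter, mem_Icc] at hm hm'
        omega

section PartialSums

variable {M : Type*} [AddCommGroup M] [Module ℝ M]

noncomputable def xiPartialSum (p : ℕ) (φ : ℕ → ℤ → ℝ) (c : ℤ → M) (t : ℤ) (n : ℕ) : M :=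
  ∑ r ∈ range (n + 1), xi p φ t r • c (t - r)

theorem xiPartialSum_eq (p : ℕ) (φ : ℕ → ℤ → ℝ) (c : ℤ → M) (t : ℤ) {n : ℕ} (hn : p ≤ n) :
    xiPartialSum p φ c t n =
      c t + ∑ m ∈ Icc 1 p, φ m t • xiPartialSum p φ c (t - m) (n - m) := by
  have h_tail : ∀ i ∈ range n, xi p φ t (i + 1 : ℕ) • c (t - (i + 1 : ℕ)) =
      ∑ m ∈ Icc 1 p, φ m t • (xi p φ (t - m) ((i + 1 : ℕ) - m) • c (t - (i + 1 : ℕ))) :=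
    fun i _ => by
      rw [xi_eq_sum p φ t (by omega), sum_smul]
      simp only [mul_smul]
  rw [xiPartialSum, sum_range_succ', sum_congr rfl h_tail, sum_comm,
    Nat.cast_zero, xi_zero, one_smul, sub_zero, add_comm]
  congr 1
  refine sum_congr rfl fun m hm => ?_
  obtain ⟨hm1, hmp⟩ := mem_Icc.mp hm
  rw [xiPartialSum, ← smul_sum, show n = (m - 1) + (n - m + 1) by omega,
    sum_range_add, sum_eq_zero fun i hi => ?_, zero_add]
  · congr 1
    refine sum_congr (by congr 1; omega) fun s _ => ?_
    congr 2 <;> push_cast [Nat.cast_sub hm1] <;> ring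
  · rw [xi_of_neg p φ _ (by simp at hi; omega), zero_smul]

theorem eq_add_sum_of_tendsto_xiPartialSum [TopologicalSpace M] [ContinuousAdd M]
    [ContinuousConstSMul ℝ M] [T2Space M] (p : ℕ) (φ : ℕ → ℤ → ℝ) {c L : ℤ → M}
    (hL : ∀ u, Tendsto (xiPartialSum p φ c u) atTop (𝓝 (L u))) (t : ℤ) :
    L t = c t + ∑ m ∈ Icc 1 p, φ m t • L (t - m) := by
  have h_rhs : Tendsto (fun n => c t + ∑ m ∈ Icc 1 p, φ m t • xiPartialSum p φ c (t - m) (n - m))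
      atTop (𝓝 (c t + ∑ m ∈ Icc 1 p, φ m t • L (t - m))) :=
    tendsto_const_nhds.add <| tendsto_finsetSum _ fun m _ =>
      ((hL (t - m)).comp (tendsto_sub_atTop_nat m)).const_smul _
  refine tendsto_nhds_unique (hL t) (h_rhs.congr' ?_)
  filter_upwards [eventually_ge_atTop p] with n hn
  exact (xiPartialSum_eq p φ c t hn).symm

end PartialSums

namespace MeasureTheory.MemLp

variable {α E : Type*} {m : MeasurableSpace α} {μ : Measure α} {p : ENNReal}
  [NormedAddCommGroup E]

theorem toLp_finsetSum {ι : Type*} (s : Finset ι) {f : ι → α → E} (hf : ∀ i, MemLp (f i) p μ) :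
    (memLp_finsetSum s fun i _ => hf i).toLp (fun a => ∑ i ∈ s, f i a) =
      ∑ i ∈ s, (hf i).toLp (f i) := by
  classical
  induction s using Finset.induction_on with
  | empty => simp only [sum_empty]; rfl
  | insert i s hi ih =>
    rw [sum_insert hi, ← ih, ← toLp_add]
    exact toLp_congr _ _ (.of_forall fun a => by simp [sum_insert hi])

theorem norm_toLp_sq {f : α → ℝ} (hf : MemLp f 2 μ) : ‖hf.toLp f‖ ^ 2 = ∫ a, f a ^ 2 ∂μ := by
  rw [← real_inner_self_eq_norm_sq, L2.inner_def]
  exact integral_congr_ae (hf.coeFn_toLp.mono fun a ha => by simp [ha, sq])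

theorem tendsto_toLp_of_tendsto_integral_sq {ι : Type*} {l : Filter ι} {f : ι → α → ℝ}
    {g : α → ℝ} (hf : ∀ i, MemLp (f i) 2 μ) (hg : MemLp g 2 μ)
    (h : Tendsto (fun i => ∫ a, (f i a - g a) ^ 2 ∂μ) l (𝓝 0)) :
    Tendsto (fun i => (hf i).toLp (f i)) l (𝓝 (hg.toLp g)) := by
  have h_norm (i : ι) : ‖(hf i).toLp (f i) - hg.toLp g‖ = √(∫ a, (f i a - g a) ^ 2 ∂μ) := by
    rw [← toLp_sub, ← Real.sqrt_sq (norm_nonneg _), norm_toLp_sq]; rfl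
  rw [tendsto_iff_norm_sub_tendsto_zero]
  simpa only [h_norm, Real.sqrt_zero] using h.sqrt

end MeasureTheory.MemLp

section Stochastic

variable {Ω : Type*} {m0 : MeasurableSpace Ω} {μ : Measure Ω}

theorem toLp_xiPartialSum {E : Type*} [NormedAddCommGroup E] [NormedSpace ℝ E] {q : ENNReal}
    (p : ℕ) (φ : ℕ → ℤ → ℝ) {ε : ℤ → Ω → E} (hε : ∀ u, MemLp (ε u) q μ) (t : ℤ) (n : ℕ)
    (h : MemLp (fun ω => xiPartialSum p φ (ε · ω) t n) q μ) :
    h.toLp _ = xiPartialSum p φ (fun u => (hε u).toLp (ε u)) t n :=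
  MemLp.toLp_finsetSum (range (n + 1)) (f := fun r : ℕ => xi p φ t r • ε (t - r))
    fun r => (hε (t - r)).const_smul (xi p φ t r)

theorem ae_eq_add_sum_of_tendsto_xiPartialSum (p : ℕ) (φ : ℕ → ℤ → ℝ) {ε Z : ℤ → Ω → ℝ}
    (hε : ∀ u, MemLp (ε u) 2 μ) (hZ : ∀ u, MemLp (Z u) 2 μ)
    (h : ∀ u, Tendsto (fun n => ∫ ω, (xiPartialSum p φ (ε · ω) u n - Z u ω) ^ 2 ∂μ) atTop (𝓝 0))
    (t : ℤ) : Z t =ᵐ[μ] fun ω => ε t ω + ∑ m ∈ Icc 1 p, φ m t * Z (t - m) ω := by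
  have hS (u : ℤ) (n : ℕ) : MemLp (fun ω => xiPartialSum p φ (ε · ω) u n) 2 μ :=
    memLp_finsetSum (range (n + 1)) (f := fun r : ℕ => xi p φ u r • ε (u - r))
      fun r _ => (hε (u - r)).const_smul (xi p φ u r)
  have h_lim := eq_add_sum_of_tendsto_xiPartialSum (M := Lp ℝ 2 μ) p φ
    (c := fun u => (hε u).toLp (ε u)) (L := fun u => (hZ u).toLp (Z u)) (fun u => by
      simpa only [toLp_xiPartialSum p φ hε] using
        MemLp.tendsto_toLp_of_tendsto_integral_sq (hS u) (hZ u) (h u)) t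
  have h_sum := memLp_finsetSum (Icc 1 p) (f := fun m : ℕ => φ m t • Z (t - m))
    fun m _ => (hZ (t - m)).const_smul (φ m t)
  have h_rhs : ((hε t).add h_sum).toLp _ =
      (hε t).toLp (ε t) + ∑ m ∈ Icc 1 p, φ m t • (hZ (t - m)).toLp (Z (t - m)) := by
    rw [MemLp.toLp_add (hε t) h_sum,
      MemLp.toLp_finsetSum _ fun m : ℕ => (hZ (t - m)).const_smul (φ m t)]
    rfl
  exact (MemLp.toLp_eq_toLp_iff _ _).mp (h_lim.trans h_rhs.symm)

end Stochastic

theorem ma_infinity_solves_par_general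
    (p : ℕ) (φ : ℕ → ℤ → ℝ)
    {Ω : Type*} {m0 : MeasurableSpace Ω} {μ : Measure Ω}
    (ε : ℤ → Ω → ℝ)
    (hεL2 : ∀ τ : ℤ, MemLp (ε τ) 2 μ)
    (mu : ℤ → ℝ)
    (hmu : ∀ t : ℤ, Tendsto
      (fun n : ℕ => ∑ r ∈ Finset.range (n + 1), xi p φ t r * φ 0 (t - r))
      atTop (nhds (mu t)))
    (Z : ℤ → Ω → ℝ)
    (hZL2 : ∀ t : ℤ, MemLp (Z t) 2 μ)
    (hZ : ∀ t : ℤ, Tendsto (fun n : ℕ =>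
        ∫ ω, ((∑ r ∈ Finset.range (n + 1), xi p φ t r * ε (t - r) ω) - Z t ω) ^ 2 ∂μ)
      atTop (nhds 0))
    (Y : ℤ → Ω → ℝ)
    (hY : ∀ t : ℤ, ∀ ω, Y t ω = mu t + Z t ω)
 :
    ∀ t : ℤ, Y t =ᵐ[μ] fun ω =>
      φ 0 t + (∑ m ∈ Finset.Icc 1 p, φ m t * Y (t - m) ω) + ε t ω := by
  intro t
  have h_mean : mu t = φ 0 t + ∑ m ∈ Icc 1 p, φ m t * mu (t - m) :=
    eq_add_sum_of_tendsto_xiPartialSum p φ hmu t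
  filter_upwards [ae_eq_add_sum_of_tendsto_xiPartialSum p φ hεL2 hZL2 hZ t] with ω h_noise
  simp only [hY, h_noise, mul_add, sum_add_distrib]
  linear_combination h_mean

/-- Under Assumption 1, the MA(∞) process `Y_t = Σ_{r=0}^∞ ξ_{t,r} (φ_0(t−r) + ε_{t−r})`
solves the PAR(`p`) equation. -/
theorem ma_infinity_solves_par
    (p : ℕ) (hp : 1 ≤ p) (φ : ℕ → ℤ → ℝ)
    {Ω : Type*} {m0 : MeasurableSpace Ω} {μ : Measure Ω} [IsProbabilityMeasure μ]
    (𝓕 : Filtration ℤ m0)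
    (ε : ℤ → Ω → ℝ)
    (hεmeas : ∀ τ : ℤ, StronglyMeasurable[𝓕 τ] (ε τ))
    (hεL2 : ∀ τ : ℤ, MemLp (ε τ) 2 μ)
    (hεmart : ∀ τ : ℤ, μ[ε τ | 𝓕 (τ - 1)] =ᵐ[μ] 0)
    (hA1 : ∀ r : ℕ, BddAbove (Set.range fun τ : ℤ =>
      (xi p φ τ r) ^ 2 * ∫ ω, (ε (τ - r) ω) ^ 2 ∂μ))
    (hA2 : Summable fun r : ℕ => ⨆ τ : ℤ,
      (xi p φ τ r) ^ 2 * ∫ ω, (ε (τ - r) ω) ^ 2 ∂μ)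
    (mu : ℤ → ℝ)
    (hmu : ∀ t : ℤ, Tendsto
      (fun n : ℕ => ∑ r ∈ Finset.range (n + 1), xi p φ t r * φ 0 (t - r))
      atTop (nhds (mu t)))
    (Z : ℤ → Ω → ℝ)
    (hZL2 : ∀ t : ℤ, MemLp (Z t) 2 μ)
    (hZ : ∀ t : ℤ, Tendsto (fun n : ℕ =>
        ∫ ω, ((∑ r ∈ Finset.range (n + 1), xi p φ t r * ε (t - r) ω) - Z t ω) ^ 2 ∂μ)
      atTop (nhds 0))
    (Y : ℤ → Ω → ℝ)
    (hY : ∀ t : ℤ, ∀ ω, Y t ω = mu t + Z t ω)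
 :
    ∀ t : ℤ, Y t =ᵐ[μ] fun ω =>
      φ 0 t + (∑ m ∈ Finset.Icc 1 p, φ m t * Y (t - m) ω) + ε t ω :=
  ma_infinity_solves_par_general p φ (m0 := m0) ε hεL2 mu hmu Z hZL2 hZ Y hY
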